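/- arXiv:2304.00479 — 2 statements merged into one kernel-verified Lean document; each statement's English description precedes it below -/
import Mathlib

section
/- Let f : ℝ → ℝ be concave with f(0) = 0, let α ≥ 0, and let k be an integer with 1 ≤ k ≤ n. The convex hull of P^1_k = {(x,w) ∈ {0,1}^n × ℝ : w ≥ f(α Σ_{i=1}^n x_i), Σ_{i=1}^n x_i ≤ k} equals the set of (x,w) ∈ ℝ^n × ℝ satisfying 0 ≤ x_i ≤ 1 for all i, Σ_{i=1}^n x_i ≤ k, and all separation inequalities: w ≥ Σ_{i=1}^{i_0} ρ_i x_{δ(i)} + Σ_{i=i_0+1}^{n} ψ x_{δ(i)} for every permutation δ of N and every integer 0 ≤ i_0 ≤ k−1, where ρ_i := f(iα) − f((i−1)α) and ψ := (f(kα) − f(i_0 α))/(k − i_0). -/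
/-!
Write `g t = f (t α)`. For a 0/1 point with `m ≤ k` ones, concavity makes the coefficients of
each separation inequality antitone along the positions, so their sum over the support is at most
their sum over the first `m` positions, which is at most `g m`. Hence the polyhedron, being
convex, contains the hull.

Conversely, sort `x` decreasingly and pick `i0 < k` such that
`μ = (∑_{t ≥ i0} x_t) / (k - i0)` lies below the head `x_0, …, x_{i0-1}` and above the tail.
Then `x` is a mixture, with weights the successive drops of `1 ≥ x_0 ≥ ⋯ ≥ x_{i0-1} ≥ μ ≥ 0`, of
the indicators of the first `j ≤ i0` positions and of one vector that is `1` on the head and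
`x / μ` on the tail. That vector lies in the hypersimplex `{0 ≤ u ≤ 1, ∑ u = k}`, whose points
are mixtures of 0/1 vectors by Birkhoff's theorem. By Abel summation the height of the mixture is
the right-hand side of the separation inequality for `i0`, so `(x, w)` lies in the hull.
-/

open Finset Matrix

/-- The coefficient of the sorted position `t` (counted from `0`) in the separation inequality
for `i0`: `ρ_{t+1}` if `t < i0` and `ψ` otherwise, for `g t = f (t α)`. -/
noncomputable def sepCoef (g : ℝ → ℝ) (k i0 t : ℕ) : ℝ :=
  if t < i0 then g (t + 1) - g t else (g k - g i0) / (k - i0)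

def binaryEpigraph (ι : Type*) [Fintype ι] (g : ℝ → ℝ) (k : ℕ) :
    Set ((ι → ℝ) × ℝ) :=
  {p | (∀ i, p.1 i = 0 ∨ p.1 i = 1) ∧ ∑ i, p.1 i ≤ k ∧ g (∑ i, p.1 i) ≤ p.2}

def separationPolyhedron (g : ℝ → ℝ) (n k : ℕ) : Set ((Fin n → ℝ) × ℝ) :=
  {p | (∀ i, 0 ≤ p.1 i ∧ p.1 i ≤ 1) ∧ ∑ i, p.1 i ≤ k ∧
    ∀ (δ : Equiv.Perm (Fin n)) (i0 : ℕ), i0 ≤ k - 1 →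
      ∑ i : Fin n, sepCoef g k i0 i * p.1 (δ i) ≤ p.2}

namespace ConcaveOn

variable {g : ℝ → ℝ} (hg : ConcaveOn ℝ (Set.Ici 0) g)
include hg

theorem secant_anti_nat {a x y : ℕ} (hax : a < x) (hxy : x ≤ y) :
    (g y - g a) / (y - a) ≤ (g x - g a) / (x - a) := by
  have := hg.neg.secant_mono (a := (a : ℝ)) (x := x) (y := y) (Set.mem_Ici.2 a.cast_nonneg)
    (Set.mem_Ici.2 x.cast_nonneg) (Set.mem_Ici.2 y.cast_nonneg) (by exact_mod_cast hax.ne')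
    (by exact_mod_cast (hax.trans_le hxy).ne') (by exact_mod_cast hxy)
  simp only [Pi.neg_apply, neg_sub_neg, ← neg_sub (g _) (g a), neg_div] at this
  linarith

theorem antitone_sub_nat : Antitone fun t : ℕ => g (t + 1) - g t := by
  refine antitone_nat_of_succ_le fun t => ?_
  have := hg.slope_anti_adjacent (x := t) (y := t + 1) (z := t + 2)
    (Set.mem_Ici.2 t.cast_nonneg) (Set.mem_Ici.2 (by positivity)) (by linarith) (by linarith)
  push_cast
  norm_num [show (t : ℝ) + 2 = t + 1 + 1 by ring] at this ⊢
  linarith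

end ConcaveOn

section sepCoef

variable {g : ℝ → ℝ} {k i0 t : ℕ}

theorem sepCoef_of_lt (h : t < i0) : sepCoef g k i0 t = g (t + 1) - g t := if_pos h

theorem sepCoef_of_le (h : i0 ≤ t) : sepCoef g k i0 t = (g k - g i0) / (k - i0) :=
  if_neg (Nat.not_lt.2 h)

theorem sepCoef_antitone (hg : ConcaveOn ℝ (Set.Ici 0) g) (hi0 : i0 < k) :
    Antitone (sepCoef g k i0) := by
  have hψ : (g k - g i0) / (k - i0) ≤ g (i0 + 1) - g i0 := by
    simpa using hg.secant_anti_nat (Nat.lt_succ_self i0) hi0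
  intro a b hab
  simp only [sepCoef]
  split_ifs with hb ha ha
  · exact hg.antitone_sub_nat hab
  · omega
  · exact hψ.trans (hg.antitone_sub_nat (by omega))
  · rfl

theorem sum_range_sepCoef_le (hg : ConcaveOn ℝ (Set.Ici 0) g) {m : ℕ}
    (hm : m ≤ k) : ∑ t ∈ range m, sepCoef g k i0 t ≤ g m - g 0 := by
  have htel (l : ℕ) : ∑ t ∈ range l, (g (t + 1) - g t) = g l - g 0 := by
    simpa using sum_range_sub (fun t : ℕ => g t) l
  rcases le_or_gt m i0 with hmi | hmi
  · rw [sum_congr rfl fun t ht => sepCoef_of_lt ((mem_range.1 ht).trans_le hmi), htel]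
  obtain ⟨r, rfl⟩ := Nat.exists_eq_add_of_le hmi.le
  have hr : (0 : ℝ) < r := by exact_mod_cast (Nat.lt_add_right_iff_pos.1 hmi)
  rw [sum_range_add, sum_congr rfl fun t ht => sepCoef_of_lt (mem_range.1 ht),
    sum_congr rfl fun t _ => sepCoef_of_le (Nat.le_add_right i0 t), htel, sum_const, card_range,
    nsmul_eq_mul]
  have hsec := hg.secant_anti_nat hmi hm
  push_cast at hsec ⊢
  rw [add_sub_cancel_left, le_div_iff₀ hr] at hsec
  linarith

theorem sum_range_sepCoef_mul (g : ℝ → ℝ) {n k i0 : ℕ} (hi0n : i0 ≤ n) (Y : ℕ → ℝ) :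
    ∑ t ∈ range n, sepCoef g k i0 t * Y t =
      ∑ t ∈ range i0, (g (t + 1) - g t) * Y t +
        (g k - g i0) / (k - i0) * ∑ t ∈ Ico i0 n, Y t := by
  rw [← sum_range_add_sum_Ico _ hi0n, mul_sum]
  congr 1 <;> refine sum_congr rfl fun t ht => ?_
  · rw [sepCoef_of_lt (mem_range.1 ht)]
  · rw [sepCoef_of_le (mem_Ico.1 ht).1]

end sepCoef

theorem Antitone.sum_le_sum_range_card {c : ℕ → ℝ} (hc : Antitone c) (T : Finset ℕ) :
    ∑ t ∈ T, c t ≤ ∑ t ∈ range #T, c t := by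
  have hcard : #(T \ range #T) = #(range #T \ T) :=
    card_sdiff_eq_card_sdiff_iff.2 (card_range _).symm
  have hout : ∑ t ∈ T \ range #T, c t ≤ #(T \ range #T) • c #T :=
    sum_le_card_nsmul _ _ _ fun t ht => hc (by simpa using (mem_sdiff.1 ht).2)
  have hin : #(range #T \ T) • c #T ≤ ∑ t ∈ range #T \ T, c t :=
    card_nsmul_le_sum _ _ _ fun t ht => hc (mem_range.1 (mem_sdiff.1 ht).1).le
  rw [← sum_inter_add_sum_sdiff T (range #T), ← sum_inter_add_sum_sdiff (range #T) T,
    inter_comm]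
  rw [hcard] at hout
  linarith

theorem Antitone.exists_sum_mul_le_of_binary {n : ℕ} {c : ℕ → ℝ} (hc : Antitone c)
    {y : Fin n → ℝ} (hy : ∀ i, y i = 0 ∨ y i = 1) :
    ∃ m : ℕ, ∑ i : Fin n, y i = m ∧
      ∑ i : Fin n, c i * y i ≤ ∑ t ∈ range m, c t := by
  classical
  set T : Finset (Fin n) := {i | y i = 1}
  refine ⟨#T, ?_, ?_⟩
  · rw [← sum_boole]
    exact sum_congr rfl fun i _ => by rcases hy i with h | h <;> simp [h]
  · calc ∑ i : Fin n, c i * y i = ∑ t ∈ T.map Fin.valEmbedding, c t := by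
          rw [sum_map, sum_filter]
          exact sum_congr rfl fun i _ => by rcases hy i with h | h <;> simp [h]
      _ ≤ _ := (hc.sum_le_sum_range_card _).trans_eq (by rw [card_map])

theorem convex_separationPolyhedron (g : ℝ → ℝ) (n k : ℕ) :
    Convex ℝ (separationPolyhedron g n k) := by
  rintro p ⟨hp01, hpk, hpsep⟩ q ⟨hq01, hqk, hqsep⟩ a b ha hb hab
  simp only [separationPolyhedron, Set.mem_ofPred_eq, Prod.fst_add, Prod.snd_add, Prod.smul_fst,
    Prod.smul_snd, Pi.add_apply, Pi.smul_apply, smul_eq_mul, sum_add_distrib, mul_add,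
    ← mul_sum, mul_left_comm _ a, mul_left_comm _ b]
  refine ⟨fun i => ⟨?_, ?_⟩, ?_, fun δ i0 hi0 => ?_⟩
  · nlinarith [hp01 i, hq01 i]
  · nlinarith [hp01 i, hq01 i]
  · nlinarith
  · nlinarith [hpsep δ i0 hi0, hqsep δ i0 hi0]

theorem binaryEpigraph_subset_separationPolyhedron {g : ℝ → ℝ}
    (hg : ConcaveOn ℝ (Set.Ici 0) g) (hg0 : g 0 = 0) {n k : ℕ} (hk : 1 ≤ k) :
    binaryEpigraph (Fin n) g k ⊆ separationPolyhedron g n k := by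
  rintro ⟨x, w⟩ ⟨hx, hxk, hxw⟩
  refine ⟨fun i => by rcases hx i with h | h <;> simp_all, hxk, fun δ i0 hi0 => ?_⟩
  obtain ⟨m, hm, hle⟩ := (sepCoef_antitone hg (by omega : i0 < k)).exists_sum_mul_le_of_binary
    fun i => hx (δ i)
  rw [Equiv.sum_comp δ x] at hm
  have hmk : m ≤ k := by exact_mod_cast hm ▸ hxk
  calc _ ≤ _ := hle
    _ ≤ g m - g 0 := sum_range_sepCoef_le hg hmk
    _ ≤ w := by simpa [hg0, ← hm] using hxw

/-- The matrix has rows `z / s` where `v = 1` and `(1 - z) / (N - s)` where `v = 0`; a division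
by zero only occurs when `s = 0` or `s = N`, where `z` is constantly `0` or `1`. -/
theorem exists_mem_doublyStochastic_vecMul_eq {ι : Type*} [Fintype ι] [DecidableEq ι]
    {v z : ι → ℝ} (hv : ∀ i, v i = 0 ∨ v i = 1) (hz : ∀ i, 0 ≤ z i ∧ z i ≤ 1)
    (hvz : ∑ i, v i = ∑ i, z i) : ∃ M ∈ doublyStochastic ℝ ι, v ᵥ* M = z := by
  set s := ∑ i, z i
  set N : ℝ := (Fintype.card ι : ℝ)
  have hv01 : ∀ i, 0 ≤ v i ∧ v i ≤ 1 := fun i => by rcases hv i with h | h <;> simp [h]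
  have hsN : s ≤ N := by simpa using sum_le_sum fun i (_ : i ∈ univ) => (hz i).2
  have extreme : ∀ u : ι → ℝ, (∀ i, 0 ≤ u i ∧ u i ≤ 1) → ∑ i, u i = s → ∀ i,
      (s = 0 → u i = 0) ∧ (N - s = 0 → 1 - u i = 0) := fun u hu hus i =>
    ⟨fun h => (sum_eq_zero_iff_of_nonneg fun j _ => (hu j).1).1 (hus.trans h) i (mem_univ i),
      fun h => (sum_eq_zero_iff_of_nonneg (f := fun j => 1 - u j)
        fun j _ => sub_nonneg.2 (hu j).2).1 (by simpa [sum_sub_distrib, hus] using h) i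
          (mem_univ i)⟩
  refine ⟨fun r i => v r * (z i / s) + (1 - v r) * ((1 - z i) / (N - s)),
    mem_doublyStochastic_iff_sum.2 ⟨fun r i => ?_, fun r => ?_, fun i => ?_⟩, ?_⟩
  · exact add_nonneg
      (mul_nonneg (hv01 r).1 (div_nonneg (hz i).1 (sum_nonneg fun j _ => (hz j).1)))
      (mul_nonneg (sub_nonneg.2 (hv01 r).2)
        (div_nonneg (sub_nonneg.2 (hz i).2) (sub_nonneg.2 hsN)))
  · simp only [sum_add_distrib, ← mul_sum, ← sum_div, sum_sub_distrib, sum_const, card_univ,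
      nsmul_eq_mul, mul_one]
    rw [← mul_div_assoc, mul_div_cancel_of_imp (extreme v hv01 hvz r).1, ← mul_div_assoc,
      mul_div_cancel_of_imp (extreme v hv01 hvz r).2]
    ring
  · simp only [sum_add_distrib, ← sum_mul, hvz, sum_sub_distrib, sum_const, card_univ,
      nsmul_eq_mul, mul_one]
    rw [mul_div_cancel_of_imp' (extreme z hz rfl i).1,
      mul_div_cancel_of_imp' (extreme z hz rfl i).2]
    ring
  · ext i
    have : ∀ r, v r * (v r * (z i / s) + (1 - v r) * ((1 - z i) / (N - s))) = v r * (z i / s) :=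
      fun r => by rcases hv r with h | h <;> simp [h]
    simp only [vecMul, dotProduct, this, ← sum_mul, hvz]
    exact mul_div_cancel_of_imp' (extreme z hz rfl i).1

theorem mem_convexHull_binary_of_sum_eq {ι : Type*} [Fintype ι] [DecidableEq ι] {z : ι → ℝ}
    (hz : ∀ i, 0 ≤ z i ∧ z i ≤ 1) {d : ℕ} (hd : ∑ i, z i = d) :
    z ∈ convexHull ℝ {u : ι → ℝ | (∀ i, u i = 0 ∨ u i = 1) ∧ ∑ i, u i = d} := by
  have hdN : d ≤ #(univ : Finset ι) := by
    have := sum_le_sum fun i (_ : i ∈ univ) => (hz i).2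
    simp only [hd, sum_const, nsmul_eq_mul, mul_one] at this
    exact_mod_cast this
  obtain ⟨S, -, hS⟩ := exists_subset_card_eq hdN
  let v : ι → ℝ := fun r => if r ∈ S then 1 else 0
  have hv : ∀ r, v r = 0 ∨ v r = 1 := fun r => by by_cases h : r ∈ S <;> simp [v, h]
  have hvsum : ∑ r, v r = d := by simp [v, hS]
  obtain ⟨M, hM, rfl⟩ := exists_mem_doublyStochastic_vecMul_eq hv hz (hvsum.trans hd.symm)
  rw [← SetLike.mem_coe, doublyStochastic_eq_convexHull_permMatrix] at hM
  have := Set.mem_image_of_mem (vecMulBilin ℝ ℝ v) hM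
  rw [LinearMap.image_convexHull, vecMulBilin_apply] at this
  refine convexHull_mono ?_ this
  rintro _ ⟨_, ⟨σ, rfl⟩, rfl⟩
  rw [vecMulBilin_apply, vecMul_permMatrix]
  exact ⟨fun i => hv _, (Equiv.sum_comp σ.symm v).trans hvsum⟩

theorem mem_convexHull_binaryEpigraph {ι : Type*} [Fintype ι] [DecidableEq ι] {g : ℝ → ℝ}
    {k m : ℕ} {v : ι → ℝ} {w : ℝ} (hv : ∀ i, 0 ≤ v i ∧ v i ≤ 1) (hvm : ∑ i, v i = m)
    (hmk : m ≤ k) (hw : g m ≤ w) : (v, w) ∈ convexHull ℝ (binaryEpigraph ι g k) := by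
  have := Set.mk_mem_prod (mem_convexHull_binary_of_sum_eq hv hvm)
    (subset_convexHull ℝ {w} rfl)
  rw [← convexHull_prod] at this
  refine convexHull_mono ?_ this
  rintro ⟨u, w'⟩ ⟨⟨hu, hum⟩, rfl⟩
  exact ⟨hu, hum ▸ by exact_mod_cast hmk, hum ▸ hw⟩

theorem mem_convexHull_binaryEpigraph_comp_perm {ι : Type*} [Fintype ι] {g : ℝ → ℝ}
    {k : ℕ} {v : ι → ℝ} {w : ℝ} (σ : Equiv.Perm ι)
    (h : (v, w) ∈ convexHull ℝ (binaryEpigraph ι g k)) :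
    (v ∘ σ, w) ∈ convexHull ℝ (binaryEpigraph ι g k) := by
  let L := (LinearMap.funLeft ℝ ℝ σ).prodMap (LinearMap.id : ℝ →ₗ[ℝ] ℝ)
  have := Set.mem_image_of_mem L h
  rw [L.image_convexHull] at this
  refine convexHull_mono ?_ this
  rintro _ ⟨p, ⟨hbin, hk, hw⟩, rfl⟩
  refine ⟨fun i => hbin (σ i), ?_, ?_⟩ <;> simpa [L, Equiv.sum_comp σ p.1]

theorem exists_threshold {n k : ℕ} {Y : ℕ → ℝ} (hY : Antitone Y) (hY0 : ∀ t, 0 ≤ Y t)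
    (hY1 : Y 0 ≤ 1) (hk : 1 ≤ k) (hkn : k ≤ n) (hsum : ∑ t ∈ range n, Y t ≤ k) :
    ∃ i0 < k, (∀ t < i0, ∑ s ∈ Ico i0 n, Y s ≤ (k - i0) * Y t) ∧
      (k - i0) * Y i0 ≤ ∑ s ∈ Ico i0 n, Y s ∧ ∑ s ∈ Ico i0 n, Y s ≤ k - i0 := by
  classical
  -- `i0` is the least `j` with `(k - j) Y_j ≤ ∑_{s ≥ j} Y_s`; `j = k - 1` qualifies.
  set G : ℕ → ℝ := fun j => ∑ s ∈ Ico j n, Y s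
  have hG_succ : ∀ j < n, G j = Y j + G (j + 1) := fun j hj => sum_eq_sum_Ico_succ_bot hj _
  have hlast : ((k : ℝ) - (k - 1 : ℕ)) * Y (k - 1) ≤ G (k - 1) := by
    rw [hG_succ _ (by omega), Nat.cast_sub hk, Nat.sub_add_cancel hk, Nat.cast_one,
      sub_sub_cancel, one_mul, le_add_iff_nonneg_right]
    exact sum_nonneg fun s _ => hY0 s
  have hex : ∃ j : ℕ, ((k : ℝ) - j) * Y j ≤ G j := ⟨k - 1, hlast⟩
  set i0 := Nat.find hex
  have hi0k : i0 < k := (Nat.find_min' hex hlast).trans_lt (by omega)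
  have hki0 : (0 : ℝ) ≤ k - i0 := sub_nonneg.2 (by exact_mod_cast hi0k.le)
  have hhead : ∀ t < i0, G i0 ≤ (k - i0) * Y t := by
    intro t ht
    have hmin := Nat.find_min hex (show i0 - 1 < i0 by omega)
    rw [not_le, hG_succ _ (by omega), Nat.sub_add_cancel (by omega : 1 ≤ i0),
      Nat.cast_sub (by omega : 1 ≤ i0), Nat.cast_one] at hmin
    nlinarith [mul_le_mul_of_nonneg_left (hY (show t ≤ i0 - 1 by omega)) hki0]
  refine ⟨i0, hi0k, hhead, Nat.find_spec hex, ?_⟩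
  rcases Nat.eq_zero_or_pos i0 with h0 | hpos
  · simp only [h0, ← range_eq_Ico, CharP.cast_eq_zero, sub_zero]
    exact hsum
  · nlinarith [hhead 0 hpos]

theorem sum_range_sub_mul_ite_lt (Q : ℕ → ℝ) (t m : ℕ) :
    ∑ j ∈ range m, (Q j - Q (j + 1)) * (if t < j then 1 else 0) =
      Q (min (t + 1) m) - Q m := by
  induction m with
  | zero => simp
  | succ m ih =>
    rw [sum_range_succ, ih]
    rcases lt_or_ge t m with h | h
    · rw [if_pos h, min_eq_left (by omega), min_eq_left (by omega)]; ring
    · rw [if_neg (by omega), min_eq_right (by omega), min_eq_right (by omega)]; ring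

theorem sum_range_succ_sub_mul (Q a : ℕ → ℝ) (m : ℕ) :
    ∑ j ∈ range (m + 1), (Q j - Q (j + 1)) * a j =
      Q 0 * a 0 - Q (m + 1) * a m + ∑ j ∈ range m, Q (j + 1) * (a (j + 1) - a j) := by
  induction m with
  | zero => simp; ring
  | succ m ih => rw [sum_range_succ, ih, sum_range_succ]; ring

theorem sum_fin_ite_lt {n j : ℕ} (h : j ≤ n) :
    ∑ i : Fin n, (if (i : ℕ) < j then (1 : ℝ) else 0) = j := by
  rw [Fin.sum_univ_eq_sum_range (fun i => if i < j then (1 : ℝ) else 0), sum_boole,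
    show (range n).filter (· < j) = range j by ext; simp; omega, card_range]

theorem sum_smul_mem_convexHull_of_ne_zero {ι E : Type*} [AddCommGroup E] [Module ℝ E]
    {s : Set E} {t : Finset ι} {w : ι → ℝ} {z : ι → E} (hw₀ : ∀ i ∈ t, 0 ≤ w i)
    (hw₁ : ∑ i ∈ t, w i = 1) (hz : ∀ i ∈ t, w i ≠ 0 → z i ∈ convexHull ℝ s) :
    ∑ i ∈ t, w i • z i ∈ convexHull ℝ s := by
  classical
  rw [← sum_filter_ne_zero] at hw₁
  rw [← sum_filter_of_ne fun i _ h => left_ne_zero_of_smul h]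
  exact (convex_convexHull ℝ s).sum_mem (fun i hi => hw₀ i (mem_filter.1 hi).1) hw₁
    fun i hi => hz i (mem_filter.1 hi).1 (mem_filter.1 hi).2

section Layers

variable {n : ℕ} (Y : ℕ → ℝ) (i0 : ℕ) (μ : ℝ)

/-! `Y` is the mixture over `j < i0 + 2` of `layerVector j` with weight
`layerLevel j - layerLevel (j + 1)`: for `j ≤ i0` the indicator of the first `j` positions, and for
`j = i0 + 1` the vector that is `1` before `i0` and `Y / μ` from `i0` on (junk if `μ = 0`, when
its weight vanishes). -/

noncomputable def layerLevel : ℕ → ℝ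
  | 0 => 1
  | j + 1 => if j < i0 then Y j else if j = i0 then μ else 0

noncomputable def layerVector (j : ℕ) : Fin n → ℝ := fun i =>
  if j ≤ i0 then (if (i : ℕ) < j then 1 else 0) else if (i : ℕ) < i0 then 1 else Y i / μ

variable {Y i0 μ}

theorem layerLevel_succ_le (hY : Antitone Y) (hY1 : ∀ t, Y t ≤ 1) (hμ0 : 0 ≤ μ)
    (hμ1 : μ ≤ 1) (hhead : ∀ t < i0, μ ≤ Y t) {j : ℕ} (hj : j ≤ i0 + 1) :
    layerLevel Y i0 μ (j + 1) ≤ layerLevel Y i0 μ j := by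
  rcases j with _ | j
  · simp only [layerLevel]; split_ifs <;> linarith [hY1 0]
  · simp only [layerLevel]
    split_ifs <;> first | omega | linarith [hY (Nat.le_succ j), hhead j (by omega)]

theorem sum_range_layerLevel_sub :
    ∑ j ∈ range (i0 + 2), (layerLevel Y i0 μ j - layerLevel Y i0 μ (j + 1)) = 1 := by
  rw [sum_range_sub' (layerLevel Y i0 μ)]
  simp [layerLevel]

theorem sum_layerLevel_sub_mul_layerVector (hY0 : ∀ t, 0 ≤ Y t)
    (htail : ∀ t, i0 ≤ t → Y t ≤ μ) (i : Fin n) :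
    ∑ j ∈ range (i0 + 2), (layerLevel Y i0 μ j - layerLevel Y i0 μ (j + 1)) *
      layerVector Y i0 μ j i = Y i := by
  by_cases hi : (i : ℕ) < i0
  · have hvec : ∀ j ∈ range (i0 + 2),
        layerVector Y i0 μ j i = if (i : ℕ) < j then 1 else 0 := by
      intro j hj
      simp only [layerVector, mem_range] at hj ⊢
      split_ifs <;> first | rfl | omega
    rw [sum_congr rfl fun j hj => by rw [hvec j hj], sum_range_sub_mul_ite_lt,
      min_eq_left (by omega)]
    simp [layerLevel, hi]
  · rw [sum_range_succ, sum_eq_zero fun j hj => by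
      simp only [layerVector, mem_range] at hj ⊢
      rw [if_pos (by omega), if_neg (by omega), mul_zero]]
    have hYi : μ = 0 → Y i = 0 := fun h => le_antisymm (h ▸ htail i (by omega)) (hY0 i)
    simpa [layerLevel, layerVector, hi] using mul_div_cancel_of_imp' hYi

theorem sum_layerLevel_sub_mul {g : ℝ → ℝ} (hg0 : g 0 = 0) (k : ℕ) :
    ∑ j ∈ range (i0 + 2), (layerLevel Y i0 μ j - layerLevel Y i0 μ (j + 1)) *
      g (if j ≤ i0 then j else k) =
    ∑ t ∈ range i0, (g (t + 1) - g t) * Y t + μ * (g k - g i0) := by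
  rw [sum_range_succ_sub_mul, sum_range_succ]
  have hhead : ∑ j ∈ range i0, layerLevel Y i0 μ (j + 1) *
      (g (if j + 1 ≤ i0 then ↑(j + 1) else k) - g (if j ≤ i0 then j else k)) =
      ∑ t ∈ range i0, (g (t + 1) - g t) * Y t := sum_congr rfl fun t ht => by
    have ht := mem_range.1 ht
    simp only [layerLevel, if_pos ht, if_pos ht.le, if_pos (Nat.succ_le_of_lt ht),
      Nat.cast_succ]
    ring
  rw [hhead]
  simp [layerLevel, hg0]

theorem layerVector_mem_convexHull {g : ℝ → ℝ} {k : ℕ} (hi0k : i0 < k) (hkn : k ≤ n)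
    (hY0 : ∀ t, 0 ≤ Y t) (hμ0 : 0 ≤ μ) (htail : ∀ t, i0 ≤ t → Y t ≤ μ)
    (hμG : μ * (k - i0) = ∑ t ∈ Ico i0 n, Y t) {c : ℝ} (hc : 0 ≤ c) {j : ℕ}
    (hj : j < i0 + 2) (hw : layerLevel Y i0 μ j - layerLevel Y i0 μ (j + 1) ≠ 0) :
    (layerVector Y i0 μ j, g (if j ≤ i0 then j else k) + c) ∈
      convexHull ℝ (binaryEpigraph (Fin n) g k) := by
  by_cases hji : j ≤ i0
  · refine mem_convexHull_binaryEpigraph (m := j) (fun i => ?_) ?_ (by omega) ?_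
    · simp only [layerVector, if_pos hji]; split_ifs <;> norm_num
    · simp only [layerVector, if_pos hji]; exact sum_fin_ite_lt (by omega)
    · simp [hji, hc]
  have hj : j = i0 + 1 := by omega
  subst hj
  have hμ : 0 < μ := hμ0.lt_of_ne' (by simpa [layerLevel] using hw)
  refine mem_convexHull_binaryEpigraph (m := k) (fun i => ?_) ?_ le_rfl ?_
  · simp only [layerVector, if_neg hji]
    split_ifs with hi
    · norm_num
    · exact ⟨div_nonneg (hY0 i) hμ.le, div_le_one_of_le₀ (htail i (by omega)) hμ.le⟩
  · simp only [layerVector, if_neg hji]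
    rw [Fin.sum_univ_eq_sum_range (fun t => if t < i0 then 1 else Y t / μ),
      ← sum_range_add_sum_Ico _ (by omega : i0 ≤ n),
      sum_congr rfl fun t ht => if_pos (mem_range.1 ht),
      sum_congr rfl fun t ht => if_neg (mem_Ico.1 ht).1.not_gt, ← sum_div, ← hμG,
      mul_div_cancel_left₀ _ hμ.ne']
    simp
  · simp [hji, hc]

theorem mem_convexHull_binaryEpigraph_of_threshold {g : ℝ → ℝ} (hg0 : g 0 = 0) {k : ℕ}
    (hi0k : i0 < k) (hkn : k ≤ n) (hY : Antitone Y) (hY01 : ∀ t, 0 ≤ Y t ∧ Y t ≤ 1) (hμ0 : 0 ≤ μ)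
    (hμ1 : μ ≤ 1) (hhead : ∀ t < i0, μ ≤ Y t) (htail : ∀ t, i0 ≤ t → Y t ≤ μ)
    (hμG : μ * (k - i0) = ∑ t ∈ Ico i0 n, Y t) {w : ℝ}
    (hw : ∑ t ∈ range i0, (g (t + 1) - g t) * Y t + μ * (g k - g i0) ≤ w) :
    (fun i : Fin n => Y i, w) ∈ convexHull ℝ (binaryEpigraph (Fin n) g k) := by
  set c := w - (∑ t ∈ range i0, (g (t + 1) - g t) * Y t + μ * (g k - g i0))
  have hdecomp : (fun i : Fin n => Y i, w) = ∑ j ∈ range (i0 + 2),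
      (layerLevel Y i0 μ j - layerLevel Y i0 μ (j + 1)) •
        (layerVector Y i0 μ j, g (if j ≤ i0 then j else k) + c) := by
    refine Prod.ext (funext fun i => ?_) ?_
    · simp only [Prod.fst_sum, Prod.smul_fst, Finset.sum_apply, Pi.smul_apply, smul_eq_mul]
      exact (sum_layerLevel_sub_mul_layerVector (fun t => (hY01 t).1) htail i).symm
    · simp only [Prod.snd_sum, Prod.smul_snd, smul_eq_mul, mul_add, sum_add_distrib,
        ← sum_mul, sum_range_layerLevel_sub, sum_layerLevel_sub_mul hg0, c]
      ring
  rw [hdecomp]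
  refine sum_smul_mem_convexHull_of_ne_zero (fun j hj => ?_) sum_range_layerLevel_sub
    fun j hj hw => layerVector_mem_convexHull hi0k hkn (fun t => (hY01 t).1) hμ0 htail hμG
      (by simp only [c]; linarith) (mem_range.1 hj) hw
  exact sub_nonneg.2 (layerLevel_succ_le hY (fun t => (hY01 t).2) hμ0 hμ1 hhead
    (Nat.lt_succ_iff.1 (mem_range.1 hj)))

end Layers

theorem mem_convexHull_binaryEpigraph_of_antitone {g : ℝ → ℝ} (hg0 : g 0 = 0) {n k : ℕ}
    (hk : 1 ≤ k) (hkn : k ≤ n) {y : Fin n → ℝ} (hy : Antitone y)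
    (hy01 : ∀ i, 0 ≤ y i ∧ y i ≤ 1) (hyk : ∑ i, y i ≤ k) {w : ℝ}
    (hw : ∀ i0 < k, ∑ i : Fin n, sepCoef g k i0 i * y i ≤ w) :
    (y, w) ∈ convexHull ℝ (binaryEpigraph (Fin n) g k) := by
  set Y : ℕ → ℝ := fun t => if h : t < n then y ⟨t, h⟩ else 0
  have hYy : (fun i : Fin n => Y i) = y := funext fun i => dif_pos i.isLt
  have hY01 : ∀ t, 0 ≤ Y t ∧ Y t ≤ 1 := fun t => by
    simp only [Y]; split_ifs
    exacts [hy01 _, ⟨le_rfl, zero_le_one⟩]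
  have hY : Antitone Y := fun a b hab => by
    simp only [Y]; split_ifs with hb ha
    exacts [hy (show (⟨a, ha⟩ : Fin n) ≤ ⟨b, hb⟩ from hab), by omega, (hy01 _).1, le_rfl]
  have hsum (φ : ℕ → ℝ) : ∑ i : Fin n, φ i * y i = ∑ t ∈ range n, φ t * Y t := by
    rw [← hYy]; exact Fin.sum_univ_eq_sum_range (fun t => φ t * Y t) n
  obtain ⟨i0, hi0k, hhead, htail, hG1⟩ := exists_threshold hY (fun t => (hY01 t).1) (hY01 0).2
    hk hkn (by simpa using (hsum fun _ => 1).symm.trans_le (by simpa using hyk))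
  have hki0 : (0 : ℝ) < k - i0 := sub_pos.2 (by exact_mod_cast hi0k)
  set μ := (∑ t ∈ Ico i0 n, Y t) / (k - i0)
  rw [← hYy]
  refine mem_convexHull_binaryEpigraph_of_threshold hg0 hi0k hkn hY hY01
    (div_nonneg (sum_nonneg fun t _ => (hY01 t).1) hki0.le) ((div_le_one hki0).2 hG1)
    (fun t ht => (div_le_iff₀ hki0).2 (by linarith [hhead t ht]))
    (fun t ht => (hY ht).trans ((le_div_iff₀ hki0).2 (by linarith)))
    (div_mul_cancel₀ _ hki0.ne') ?_
  have := hw i0 hi0k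
  rw [hsum, sum_range_sepCoef_mul g (by omega)] at this
  linarith [show (g k - g i0) / (k - i0) * ∑ t ∈ Ico i0 n, Y t = μ * (g k - g i0) by ring]

theorem convexHull_binaryEpigraph_eq {g : ℝ → ℝ} (hg : ConcaveOn ℝ (Set.Ici 0) g)
    (hg0 : g 0 = 0) {n k : ℕ} (hk : 1 ≤ k) (hkn : k ≤ n) :
    convexHull ℝ (binaryEpigraph (Fin n) g k) = separationPolyhedron g n k := by
  refine (convexHull_min (binaryEpigraph_subset_separationPolyhedron hg hg0 hk)
    (convex_separationPolyhedron g n k)).antisymm ?_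
  rintro ⟨x, w⟩ ⟨hx01, hxk, hsep⟩
  obtain ⟨δ, hδ⟩ : ∃ δ : Equiv.Perm (Fin n), Antitone (x ∘ δ) :=
    ⟨_, monotone_toDual_comp_iff.1 (Tuple.monotone_sort (OrderDual.toDual ∘ x))⟩
  have := mem_convexHull_binaryEpigraph_of_antitone hg0 hk hkn hδ (fun i => hx01 (δ i))
    (by rwa [Function.comp_def, Equiv.sum_comp δ x]) fun i0 hi0 => hsep δ i0 (by omega)
  simpa [Function.comp_assoc] using mem_convexHull_binaryEpigraph_comp_perm δ.symm this

theorem convexHull_P1k_eq_separation_polyhedron_general {n : ℕ}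
    (f : ℝ → ℝ)
    (hconc : ∀ s t lam : ℝ, 0 ≤ lam → lam ≤ 1 →
      lam * f s + (1 - lam) * f t ≤ f (lam * s + (1 - lam) * t))
    (h0 : f 0 = 0) (α : ℝ)
    (k : ℕ) (hk1 : 1 ≤ k) (hkn : k ≤ n) :
    convexHull ℝ
        {p : (Fin n → ℝ) × ℝ |
          (∀ i, p.1 i = 0 ∨ p.1 i = 1) ∧ (∑ i : Fin n, p.1 i) ≤ (k : ℝ) ∧
            f (α * ∑ i : Fin n, p.1 i) ≤ p.2} =
      {p : (Fin n → ℝ) × ℝ |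
        (∀ i, 0 ≤ p.1 i ∧ p.1 i ≤ 1) ∧ (∑ i : Fin n, p.1 i) ≤ (k : ℝ) ∧
        ∀ (δ : Equiv.Perm (Fin n)) (i0 : ℕ), i0 ≤ k - 1 →
          ∑ i : Fin n,
              (if (i : ℕ) < i0 then
                  f (((i : ℕ) + 1 : ℝ) * α) - f (((i : ℕ) : ℝ) * α)
                else
                  (f ((k : ℝ) * α) - f ((i0 : ℝ) * α)) / ((k : ℝ) - (i0 : ℝ))) *
                p.1 (δ i)
            ≤ p.2} := by
  have hf : ConcaveOn ℝ Set.univ f := ⟨convex_univ, fun x _ y _ a b ha _ hab => by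
    obtain rfl : b = 1 - a := by linarith
    exact hconc x y a ha (by linarith)⟩
  have hg : ConcaveOn ℝ (Set.Ici 0) fun t => f (t * α) :=
    (hf.comp_linearMap (LinearMap.id.smulRight α)).subset (Set.subset_univ _) (convex_Ici 0)
  -- Now the two sets unfold to `binaryEpigraph` and `separationPolyhedron` for `t ↦ f (t * α)`.
  simp_rw [mul_comm α]
  exact convexHull_binaryEpigraph_eq hg (by simpa using h0) hk1 hkn

/-- For concave `f` with `f(0) = 0`, `α ≥ 0`, and an integer `1 ≤ k ≤ n`, the
convex hull of `P^1_k = {(x,w) ∈ {0,1}^n × ℝ : w ≥ f(α Σ_i x_i), Σ_i x_i ≤ k}`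
equals the set of `(x,w) ∈ ℝ^n × ℝ` satisfying `0 ≤ x ≤ 1`, `Σ_i x_i ≤ k`, and
all separation inequalities
`w ≥ Σ_{i=1}^{i_0} ρ_i x_{δ(i)} + Σ_{i=i_0+1}^n ψ x_{δ(i)}`
for every permutation `δ` of `N` and integer `0 ≤ i_0 ≤ k−1`, where
`ρ_i = f(iα) − f((i−1)α)` and `ψ = (f(kα) − f(i_0 α))/(k − i_0)`. -/
theorem convexHull_P1k_eq_separation_polyhedron {n : ℕ} (hn : 0 < n)
    (f : ℝ → ℝ)
    (hconc : ∀ s t lam : ℝ, 0 ≤ lam → lam ≤ 1 →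
      lam * f s + (1 - lam) * f t ≤ f (lam * s + (1 - lam) * t))
    (h0 : f 0 = 0) (α : ℝ) (hα : 0 ≤ α)
    (k : ℕ) (hk1 : 1 ≤ k) (hkn : k ≤ n) :
    convexHull ℝ
        {p : (Fin n → ℝ) × ℝ |
          (∀ i, p.1 i = 0 ∨ p.1 i = 1) ∧ (∑ i : Fin n, p.1 i) ≤ (k : ℝ) ∧
            f (α * ∑ i : Fin n, p.1 i) ≤ p.2} =
      {p : (Fin n → ℝ) × ℝ |
        (∀ i, 0 ≤ p.1 i ∧ p.1 i ≤ 1) ∧ (∑ i : Fin n, p.1 i) ≤ (k : ℝ) ∧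
        ∀ (δ : Equiv.Perm (Fin n)) (i0 : ℕ), i0 ≤ k - 1 →
          ∑ i : Fin n,
              (if (i : ℕ) < i0 then
                  f (((i : ℕ) + 1 : ℝ) * α) - f (((i : ℕ) : ℝ) * α)
                else
                  (f ((k : ℝ) * α) - f ((i0 : ℝ) * α)) / ((k : ℝ) - (i0 : ℝ))) *
                p.1 (δ i)
            ≤ p.2} :=
  convexHull_P1k_eq_separation_polyhedron_general f hconc h0 α k hk1 hkn
end

section
/- Let f : (k+1)^N → ℝ be a k-submodular function with f(∅,…,∅) = 0. For every X ∈ (k+1)^N with binary encoding x and every w ∈ ℝ, we have w ≤ f(X) if and only if for every S ∈ (k+1)^N, w ≤ f(S) + Σ_{q=1}^k Σ_{i ∉ ∪_{r=1}^k S_r} ρ_{q,i}(S) x_i^q + Σ_{q=1}^k Σ_{p ≠ q} Σ_{i ∈ S_p} ρ_{q,i}(∅,…,∅) x_i^q − Σ_{q=1}^k Σ_{i ∈ S_q} ξ_i^q (1 − x_i^q); in particular the minimum over S of the right-hand side equals f(X), attained at S = X. -/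
/-- A `k`-set: a `k`-tuple of pairwise disjoint subsets of `N = {1,…,n}`. -/
def IsKSet {n k : ℕ} (S : Fin k → Finset (Fin n)) : Prop :=
  ∀ p q : Fin k, p ≠ q → Disjoint (S p) (S q)

/-- Component-wise intersection `X ⊓ Y` of two `k`-sets. -/
def kInf {n k : ℕ} (X Y : Fin k → Finset (Fin n)) : Fin k → Finset (Fin n) :=
  fun q => X q ∩ Y q

/-- The operation `X ⊔ Y`: `(X ⊔ Y)_q = (X_q ∪ Y_q) \ ∪_{p ≠ q}(X_p ∪ Y_p)`. -/
def kSup {n k : ℕ} (X Y : Fin k → Finset (Fin n)) : Fin k → Finset (Fin n) :=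
  fun q => (X q ∪ Y q) \ (Finset.univ.erase q).biUnion (fun p => X p ∪ Y p)

/-- `f : (k+1)^N → ℝ` is `k`-submodular if
`f(X) + f(Y) ≥ f(X ⊓ Y) + f(X ⊔ Y)` for all `k`-sets `X, Y`. -/
def KSubmodular {n k : ℕ} (f : (Fin k → Finset (Fin n)) → ℝ) : Prop :=
  ∀ X Y : Fin k → Finset (Fin n), IsKSet X → IsKSet Y →
    f (kInf X Y) + f (kSup X Y) ≤ f X + f Y

/-- The marginal return `ρ_{q,i}(X) = f(X_1,…,X_q ∪ {i},…,X_k) − f(X)`. -/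
def kMarginal {n k : ℕ} (f : (Fin k → Finset (Fin n)) → ℝ) (q : Fin k)
    (i : Fin n) (X : Fin k → Finset (Fin n)) : ℝ :=
  f (Function.update X q (insert i (X q))) - f X

/-- `ξ_i^q = min{ ρ_{q,i}(S) : S ∈ (k+1)^{N\{i}}, ∪_p S_p = N \ {i} }`. -/
noncomputable def kXi {n k : ℕ} (f : (Fin k → Finset (Fin n)) → ℝ)
    (i : Fin n) (q : Fin k) : ℝ :=
  sInf { r : ℝ | ∃ S : Fin k → Finset (Fin n), IsKSet S ∧
    Finset.univ.biUnion S = Finset.univ \ {i} ∧ r = kMarginal f q i S }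


/-- Right-hand side of the `k`-submodular inequality associated with the `k`-set
`S`, evaluated at (the binary encoding of) the `k`-set `X`. -/
noncomputable def kSubIneqRHS {n k : ℕ} (f : (Fin k → Finset (Fin n)) → ℝ)
    (S X : Fin k → Finset (Fin n)) : ℝ :=
  f S
    + (∑ q : Fin k, ∑ i ∈ Finset.univ \ Finset.univ.biUnion S,
        kMarginal f q i S * (if i ∈ X q then 1 else 0))
    + (∑ q : Fin k, ∑ p ∈ Finset.univ.erase q, ∑ i ∈ S p,
        kMarginal f q i (fun _ => ∅) * (if i ∈ X q then 1 else 0))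
    - ∑ q : Fin k, ∑ i ∈ S q,
        kXi f i q * (1 - (if i ∈ X q then 1 else 0))

/-!
Validity of each inequality, `f X ≤ kSubIneqRHS f S X`, comes from the walk
`S → S ⊔ T → T → X`, where `T_q = X_q \ ⋃_{p ≠ q} S_p`. Along each leg elements are
added or removed one at a time, and the marginals are bounded by orthant submodularity
(`ρ_{q,i}` is antitone on `k`-sets avoiding `i`): adding `i ∈ X_q \ ⋃ S` to `S` costs at
most `ρ_{q,i}(S)`, removing `i ∈ S_q \ X_q` saves at least `ξ_i^q` (every `k`-set avoiding
`i` extends to a partition of `N \ {i}`), and adding `i ∈ X_q ∩ ⋃_{p ≠ q} S_p` costs at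
most `ρ_{q,i}(∅)`. At `S = X` all correction terms vanish.
-/

open Finset Function

section KSets

variable {n k : ℕ}

theorem IsKSet.eq_of_mem {S : Fin k → Finset (Fin n)} (hS : IsKSet S) {p q : Fin k} {i : Fin n}
    (hp : i ∈ S p) (hq : i ∈ S q) : p = q :=
  by_contra fun hpq => disjoint_left.1 (hS p q hpq) hp hq

theorem IsKSet.mono {S Y : Fin k → Finset (Fin n)} (hY : IsKSet Y) (h : S ≤ Y) : IsKSet S :=
  fun p q hpq => (hY p q hpq).mono (h p) (h q)

theorem IsKSet.update_insert {S : Fin k → Finset (Fin n)} (hS : IsKSet S) {i : Fin n}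
    (hi : ∀ p, i ∉ S p) (q : Fin k) : IsKSet (update S q (insert i (S q))) := by
  intro p r hpr
  rcases eq_or_ne p q with rfl | hp
  · rw [update_self, update_of_ne hpr.symm, disjoint_insert_left]
    exact ⟨hi r, hS p r hpr⟩
  rcases eq_or_ne r q with rfl | hr
  · rw [update_self, update_of_ne hp, disjoint_insert_right]
    exact ⟨hi p, hS p r hpr⟩
  · rw [update_of_ne hp, update_of_ne hr]
    exact hS p r hpr

theorem kInf_update_insert {S Y : Fin k → Finset (Fin n)} (hSY : S ≤ Y) {i : Fin n}
    (hi : ∀ p, i ∉ Y p) (q : Fin k) : kInf (update S q (insert i (S q))) Y = S := by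
  funext p
  rcases eq_or_ne p q with rfl | hp
  · rw [kInf, update_self, insert_inter_of_notMem (hi p), inter_eq_left.2 (hSY p)]
  · rw [kInf, update_of_ne hp, inter_eq_left.2 (hSY p)]

theorem IsKSet.kSup_eq {X Y : Fin k → Finset (Fin n)} (h : IsKSet (X ⊔ Y)) :
    kSup X Y = X ⊔ Y := by
  funext p
  refine sdiff_eq_self_of_disjoint ((disjoint_biUnion_right _ _ _).2 fun r hr => ?_)
  exact h p r (mem_erase.1 hr).1.symm

theorem update_insert_sup_of_le {S Y : Fin k → Finset (Fin n)} (hSY : S ≤ Y) (i : Fin n)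
    (q : Fin k) :
    update S q (insert i (S q)) ⊔ Y = update Y q (insert i (Y q)) := by
  funext p
  rcases eq_or_ne p q with rfl | hp
  · simp [insert_union, union_eq_right.2 (hSY p)]
  · simp [update_of_ne hp, union_eq_right.2 (hSY p)]

theorem kMarginal_antitone {f : (Fin k → Finset (Fin n)) → ℝ} (hf : KSubmodular f)
    {S Y : Fin k → Finset (Fin n)} (hY : IsKSet Y) (hSY : S ≤ Y) {i : Fin n}
    (hi : ∀ p, i ∉ Y p) (q : Fin k) : kMarginal f q i Y ≤ kMarginal f q i S := by
  have hiS : ∀ p, i ∉ S p := fun p h => hi p (hSY p h)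
  have hY' : IsKSet (update S q (insert i (S q)) ⊔ Y) := by
    rw [update_insert_sup_of_le hSY]
    exact hY.update_insert hi q
  have key := hf _ Y ((hY.mono hSY).update_insert hiS q) hY
  rw [kInf_update_insert hSY hi, hY'.kSup_eq, update_insert_sup_of_le hSY] at key
  simp only [kMarginal]
  linarith

theorem IsKSet.exists_cover {Y : Fin k → Finset (Fin n)} (hY : IsKSet Y) {i : Fin n}
    (hi : ∀ p, i ∉ Y p) (q : Fin k) :
    ∃ Z, IsKSet Z ∧ Y ≤ Z ∧ univ.biUnion Z = univ \ {i} := by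
  -- everything outside the other components (and other than `i`) goes into the `q`-th one
  set Z := update Y q ((univ \ {i}) \ (univ.erase q).biUnion Y)
  have hZq : ∀ j, j ∈ Z q ↔ j ≠ i ∧ ∀ p ≠ q, j ∉ Y p := fun j => by
    simp [Z, and_comm]
  have hZp : ∀ p ≠ q, Z p = Y p := fun p hp => update_of_ne hp _ _
  refine ⟨Z, fun p r hpr => ?_, fun p => ?_, ?_⟩
  · rcases eq_or_ne p q with rfl | hp
    · rw [hZp r hpr.symm]
      exact disjoint_left.2 fun j hj => ((hZq j).1 hj).2 r hpr.symm
    rcases eq_or_ne r q with rfl | hr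
    · rw [hZp p hp]
      exact disjoint_right.2 fun j hj => ((hZq j).1 hj).2 p hp
    · rw [hZp p hp, hZp r hr]
      exact hY p r hpr
  · rcases eq_or_ne p q with rfl | hp
    · exact fun j hj => (hZq j).2 ⟨by rintro rfl; exact hi p hj,
        fun r hr hjr => hr (hY.eq_of_mem hjr hj)⟩
    · rw [hZp p hp]
  · ext j
    simp only [mem_biUnion, mem_univ, true_and, mem_sdiff, mem_singleton]
    refine ⟨fun ⟨p, hj⟩ => ?_, fun hj => ?_⟩
    · rcases eq_or_ne p q with rfl | hp
      · exact ((hZq j).1 hj).1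
      · rw [hZp p hp] at hj
        rintro rfl; exact hi p hj
    · by_cases h : ∃ p ≠ q, j ∈ Y p
      · obtain ⟨p, hp, hjp⟩ := h
        exact ⟨p, by rwa [hZp p hp]⟩
      · push Not at h
        exact ⟨q, (hZq j).2 ⟨hj, h⟩⟩

theorem kXi_le_kMarginal {f : (Fin k → Finset (Fin n)) → ℝ} (hf : KSubmodular f)
    {Y : Fin k → Finset (Fin n)} (hY : IsKSet Y) {i : Fin n} (hi : ∀ p, i ∉ Y p) (q : Fin k) :
    kXi f i q ≤ kMarginal f q i Y := by
  obtain ⟨Z, hZ, hYZ, hZi⟩ := hY.exists_cover hi q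
  have hiZ : ∀ p, i ∉ Z p := fun p h => by
    simpa using (hZi ▸ mem_biUnion.2 ⟨p, mem_univ p, h⟩ : i ∈ univ \ {i})
  have hbdd : BddBelow {r | ∃ S : Fin k → Finset (Fin n), IsKSet S ∧
      univ.biUnion S = univ \ {i} ∧ r = kMarginal f q i S} :=
    ((Set.finite_range fun S => kMarginal f q i S).subset
      (by rintro r ⟨S, -, -, rfl⟩; exact ⟨S, rfl⟩)).bddBelow
  calc kXi f i q ≤ kMarginal f q i Z := csInf_le hbdd ⟨Z, hZ, hZi, rfl⟩
    _ ≤ kMarginal f q i Y := kMarginal_antitone hf hZ hYZ hiZ q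

theorem kMarginal_neg (f : (Fin k → Finset (Fin n)) → ℝ) (q : Fin k) (i : Fin n)
    (X : Fin k → Finset (Fin n)) : kMarginal (-f) q i X = -kMarginal f q i X := by
  simp only [kMarginal, Pi.neg_apply]
  ring

theorem sum_sdiff_update_erase (A C : Fin k → Finset (Fin n)) (g : Fin k → Fin n → ℝ)
    {q : Fin k} {i : Fin n} (hi : i ∈ C q \ A q) :
    ∑ p, ∑ j ∈ C p \ A p, g p j =
      ∑ p, ∑ j ∈ update C q ((C q).erase i) p \ A p, g p j + g q i := by
  let G : ∀ p, Finset (Fin n) → ℝ := fun p s => ∑ j ∈ s \ A p, g p j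
  have hq : G q (C q) = G q ((C q).erase i) + g q i := by
    simp only [G, erase_sdiff_comm, sum_erase_add _ _ hi]
  rw [sum_congr rfl fun p _ => apply_update G C q _ p, sum_update_of_mem (mem_univ q),
    sum_eq_add_sum_sdiff_singleton_of_mem (mem_univ q)]
  change G q (C q) + _ = _
  rw [hq]
  ring

theorem le_add_sum_of_kMarginal_le {f : (Fin k → Finset (Fin n)) → ℝ}
    {A C : Fin k → Finset (Fin n)} (hC : IsKSet C) (hAC : A ≤ C) (g : Fin k → Fin n → ℝ)
    (hg : ∀ q, ∀ i ∈ C q \ A q, ∀ Z, IsKSet Z → A ≤ Z → (∀ p, i ∉ Z p) →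
      kMarginal f q i Z ≤ g q i) :
    f C ≤ f A + ∑ q, ∑ i ∈ C q \ A q, g q i := by
  induction C using WellFoundedLT.induction with
  | _ C ih =>
  by_cases hCA : C = A
  · subst hCA
    simp
  obtain ⟨q, i, hi⟩ : ∃ q, ∃ i, i ∈ C q \ A q := by
    by_contra! h
    refine hCA (le_antisymm (fun q j hj => by_contra fun hjA => ?_) hAC)
    exact h q j (mem_sdiff.2 ⟨hj, hjA⟩)
  obtain ⟨hiC, hiA⟩ := mem_sdiff.1 hi
  set C' := update C q ((C q).erase i)
  have hC'C : C' < C := by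
    refine lt_of_le_of_ne (fun p => ?_) fun h => ?_
    · rcases eq_or_ne p q with rfl | hp
      · simp [C', erase_subset]
      · simp [C', update_of_ne hp]
    · simpa [C', hiC] using congrFun h q
  have hAC' : A ≤ C' := fun p => by
    rcases eq_or_ne p q with rfl | hp
    · simpa [C'] using subset_erase.2 ⟨hAC p, hiA⟩
    · simpa [C', update_of_ne hp] using hAC p
  have hiC' : ∀ p, i ∉ C' p := fun p => by
    rcases eq_or_ne p q with rfl | hp
    · simp [C']
    · simpa [C', update_of_ne hp] using fun h => hp (hC.eq_of_mem h hiC)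
  have hC_eq : update C' q (insert i (C' q)) = C := by
    simp [C', insert_erase hiC]
  have hC' : IsKSet C' := hC.mono hC'C.le
  have hstep := hg q i hi C' hC' hAC' hiC'
  rw [kMarginal, hC_eq] at hstep
  have hrest := ih C' hC'C hC' hAC' fun p j hj => hg p j (sdiff_subset_sdiff (hC'C.le p) le_rfl hj)
  rw [sum_sdiff_update_erase A C g hi]
  linarith

theorem IsKSet.sup_sdiff_biUnion_erase {S X : Fin k → Finset (Fin n)} (hS : IsKSet S)
    (hX : IsKSet X) : IsKSet (S ⊔ fun q => X q \ (univ.erase q).biUnion S) := by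
  have hT : IsKSet fun q => X q \ (univ.erase q).biUnion S := hX.mono fun q => sdiff_subset
  intro p r hpr
  simp only [Pi.sup_apply, sup_eq_union, disjoint_union_left, disjoint_union_right]
  refine ⟨⟨hS p r hpr, disjoint_right.2 fun j hj hjT => ?_⟩,
    disjoint_left.2 fun j hj hjT => ?_, hT p r hpr⟩
  · exact (mem_sdiff.1 hjT).2 (mem_biUnion.2 ⟨r, mem_erase.2 ⟨hpr.symm, mem_univ r⟩, hj⟩)
  · exact (mem_sdiff.1 hjT).2 (mem_biUnion.2 ⟨p, mem_erase.2 ⟨hpr, mem_univ p⟩, hj⟩)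

theorem le_kSubIneqRHS {f : (Fin k → Finset (Fin n)) → ℝ} (hf : KSubmodular f)
    {S X : Fin k → Finset (Fin n)} (hS : IsKSet S) (hX : IsKSet X) :
    f X ≤ kSubIneqRHS f S X := by
  set T : Fin k → Finset (Fin n) := fun q => X q \ (univ.erase q).biUnion S
  have memT : ∀ q j, j ∈ T q ↔ j ∈ X q ∧ ∀ p ≠ q, j ∉ S p := fun q j => by
    simp [T]
  have hST : IsKSet (S ⊔ T) := hS.sup_sdiff_biUnion_erase hX
  have hadd : f (S ⊔ T) ≤ f S + ∑ q, ∑ i ∈ (S ⊔ T) q \ S q, kMarginal f q i S :=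
    le_add_sum_of_kMarginal_le hST le_sup_left _ fun q i _ Z hZ hSZ hiZ =>
      kMarginal_antitone hf hZ hSZ hiZ q
  have hremove : -f (S ⊔ T) ≤ -f T + ∑ q, ∑ i ∈ (S ⊔ T) q \ T q, -kXi f i q :=
    le_add_sum_of_kMarginal_le (f := -f) hST le_sup_right _ fun q i _ Z hZ _ hiZ => by
      rw [kMarginal_neg]
      exact neg_le_neg (kXi_le_kMarginal hf hZ hiZ q)
  have hfill : f X ≤ f T + ∑ q, ∑ i ∈ X q \ T q, kMarginal f q i (fun _ => ∅) :=
    le_add_sum_of_kMarginal_le hX (fun q => sdiff_subset) _ fun q i _ Z hZ _ hiZ =>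
      kMarginal_antitone hf hZ (fun p => empty_subset _) hiZ q
  have hsets : ∀ q, (univ \ univ.biUnion S) ∩ X q = (S ⊔ T) q \ S q ∧
      (univ.erase q).biUnion (fun p => S p ∩ X q) = X q \ T q ∧
      S q \ X q = (S ⊔ T) q \ T q := fun q => by
    refine ⟨?_, ?_, ?_⟩ <;> ext j <;>
      simp only [mem_inter, mem_sdiff, mem_univ, mem_biUnion, mem_erase, Pi.sup_apply,
        sup_eq_union', mem_union, memT] <;>
      grind [hS.eq_of_mem]
  have hdisj : ∀ q, (↑(univ.erase q) : Set (Fin k)).PairwiseDisjoint fun p => S p ∩ X q :=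
    fun q p _ r _ hpr => (hS p r hpr).mono inter_subset_left inter_subset_left
  have hxi : ∀ q, ∑ i ∈ S q, kXi f i q * (1 - if i ∈ X q then 1 else 0) =
      ∑ i ∈ S q \ X q, kXi f i q := fun q => by
    rw [sdiff_eq_filter, sum_filter]
    exact sum_congr rfl fun i _ => by split_ifs <;> simp
  simp only [sum_neg_distrib] at hremove
  simp only [kSubIneqRHS, mul_ite, mul_one, mul_zero, sum_ite_mem, ← sum_biUnion (hdisj _),
    (hsets _).1, (hsets _).2.1, hxi, (hsets _).2.2]
  linarith

theorem kSubIneqRHS_self (f : (Fin k → Finset (Fin n)) → ℝ) {X : Fin k → Finset (Fin n)}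
    (hX : IsKSet X) : kSubIneqRHS f X X = f X := by
  have hout : ∀ q, ∀ i ∈ univ \ univ.biUnion X, i ∉ X q := fun q i hi hiq =>
    (mem_sdiff.1 hi).2 (mem_biUnion.2 ⟨q, mem_univ q, hiq⟩)
  have hother : ∀ q, ∀ p ∈ univ.erase q, ∀ i ∈ X p, i ∉ X q := fun q p hp i hip hiq =>
    (mem_erase.1 hp).1 (hX.eq_of_mem hip hiq)
  rw [kSubIneqRHS, sum_eq_zero fun q _ => sum_eq_zero fun i hi => by simp [hout q i hi],
    sum_eq_zero fun q _ => sum_eq_zero fun p hp => sum_eq_zero fun i hi => by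
      simp [hother q p hp i hi],
    sum_eq_zero fun q _ => sum_eq_zero fun i hi => by simp [hi]]
  ring

end KSets

theorem kSubmodular_inequalities_exact_general {n k : ℕ}
    (f : (Fin k → Finset (Fin n)) → ℝ) (hf : KSubmodular f)
    (X : Fin k → Finset (Fin n)) (hX : IsKSet X) (w : ℝ) :
    (w ≤ f X ↔ ∀ S : Fin k → Finset (Fin n), IsKSet S → w ≤ kSubIneqRHS f S X) ∧
      kSubIneqRHS f X X = f X := by
  have hXX := kSubIneqRHS_self f hX
  refine ⟨⟨fun hw S hS => hw.trans (le_kSubIneqRHS hf hS hX), fun h => ?_⟩, hXX⟩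
  simpa only [hXX] using h X hX

/-- For a `k`-submodular `f` with `f(∅,…,∅) = 0` and any `k`-set `X` with binary
encoding `x`: `w ≤ f(X)` iff `w` satisfies the `k`-submodular inequality
associated with every `k`-set `S`; in particular the minimum over `S` of the
right-hand side equals `f(X)`, attained at `S = X`. -/
theorem kSubmodular_inequalities_exact {n k : ℕ} (hn : 0 < n) (hk : 0 < k)
    (f : (Fin k → Finset (Fin n)) → ℝ) (hf : KSubmodular f)
    (h0 : f (fun _ => ∅) = 0)
    (X : Fin k → Finset (Fin n)) (hX : IsKSet X) (w : ℝ) :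
    (w ≤ f X ↔ ∀ S : Fin k → Finset (Fin n), IsKSet S → w ≤ kSubIneqRHS f S X) ∧
      kSubIneqRHS f X X = f X :=
  kSubmodular_inequalities_exact_general f hf X hX w
end
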